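/- Let d be even with d ≥ 2, let μ be the Haar probability measure on the unitary group U(d) = Matrix.unitaryGroup (Fin d) ℂ, and let P : Matrix (Fin d) (Fin d) ℂ be an orthogonal projector of rank d/2. Then ∫ U, ∫ V, ‖U P U† − V P V†‖_F dμ(V) dμ(U) ≥ sqrt(d) / 2, where ‖·‖_F denotes the Frobenius (Hilbert–Schmidt) norm. -/

import Mathlib

open MeasureTheory
open scoped Matrix

noncomputable instance matrixMeasurableSpace {m n : Type*} : MeasurableSpace (Matrix m n ℂ) :=
  (inferInstance : MeasurableSpace (m → n → ℂ))

noncomputable def frobNorm {ι : Type*} [Fintype ι] (A : Matrix ι ι ℂ) : ℝ :=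
  Real.sqrt (∑ x, ∑ y, ‖A x y‖ ^ 2)

/-! Writing `f W = ‖P - W P Wᴴ‖_F`, left invariance of `μ` turns the double integral into
`∫ f dμ`. For star projections `P`, `Q` one has `(P - Q)² + (1 - P - Q)² = 1`, hence
`‖P - Q‖_F² + ‖(1 - P) - Q‖_F² = d`. Since `P` and `1 - P` both have rank `d/2`, some
unitary `X` conjugates `P` to `1 - P`, and then `f W ^ 2 + f (X W) ^ 2 = d`. Averaging over `W`
gives `∫ f² dμ = d/2`, while `f ≤ √d` gives `f² ≤ √d f`; so `√d ∫ f dμ ≥ d/2`. -/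

instance Matrix.borelSpace {m n : Type*} [Countable m] [Countable n] :
    BorelSpace (Matrix m n ℂ) :=
  (inferInstance : BorelSpace (m → n → ℂ))

instance Matrix.unitaryGroup.borelSpace {n : Type*} [Fintype n] [DecidableEq n] :
    BorelSpace (Matrix.unitaryGroup n ℂ) :=
  Subtype.borelSpace _

theorem IsIdempotentElem.sub_mul_self_add_one_sub_sub_mul_self {R : Type*} [Ring R] {p q : R}
    (hp : IsIdempotentElem p) (hq : IsIdempotentElem q) :
    (p - q) * (p - q) + (1 - p - q) * (1 - p - q) = 1 := by
  have hp' : p * p = p := hp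
  have hq' : q * q = q := hq
  noncomm_ring
  simp only [hp', hq']
  abel

theorem exists_perm_apply_iff_not {ι : Type*} [Fintype ι] (p : ι → Prop) [DecidablePred p]
    (h : Fintype.card {i // p i} = Fintype.card {i // ¬p i}) :
    ∃ σ : Equiv.Perm ι, ∀ i, p (σ i) ↔ ¬p i := by
  let e : {i // p i} ≃ {i // ¬p i} := Fintype.equivOfCardEq h
  refine ⟨(Equiv.sumCompl p).symm.trans
    ((e.sumCongr e.symm).trans ((Equiv.sumComm _ _).trans (Equiv.sumCompl p))), fun i => ?_⟩
  by_cases hi : p i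
  · simpa [hi, Equiv.sumCompl_symm_apply_of_pos] using (e ⟨i, hi⟩).2
  · simpa [hi, Equiv.sumCompl_symm_apply_of_neg] using (e.symm ⟨i, hi⟩).2

section Matrices

open Matrix

variable {ι : Type*} [Fintype ι]

theorem frobNorm_nonneg (A : Matrix ι ι ℂ) : 0 ≤ frobNorm A := Real.sqrt_nonneg _

@[fun_prop]
theorem continuous_frobNorm : Continuous (frobNorm : Matrix ι ι ℂ → ℝ) := by
  unfold frobNorm
  fun_prop

theorem re_trace_star_mul_self (A : Matrix ι ι ℂ) :
    (star A * A).trace.re = ∑ x, ∑ y, ‖A x y‖ ^ 2 := by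
  rw [Finset.sum_comm]
  simp [Matrix.trace, Matrix.mul_apply, Complex.re_sum, Complex.sq_norm, Complex.normSq_apply]

theorem frobNorm_sq (A : Matrix ι ι ℂ) : frobNorm A ^ 2 = (star A * A).trace.re := by
  rw [frobNorm, Real.sq_sqrt (by positivity), re_trace_star_mul_self]

theorem star_submatrix_id_mul_mul_submatrix_id (U P : Matrix ι ι ℂ) (σ : Equiv.Perm ι) :
    star (U.submatrix id σ) * P * U.submatrix id σ = (star U * P * U).submatrix σ σ := by
  rw [star_eq_conjTranspose, conjTranspose_submatrix, ← star_eq_conjTranspose,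
    ← submatrix_id_id P, ← submatrix_mul _ _ _ _ _ Function.bijective_id,
    ← submatrix_mul _ _ _ _ _ Function.bijective_id, submatrix_id_id]

variable [DecidableEq ι]

theorem frobNorm_sub_sq_add_frobNorm_one_sub_sub_sq {P Q : Matrix ι ι ℂ}
    (hP : IsStarProjection P) (hQ : IsStarProjection Q) :
    frobNorm (P - Q) ^ 2 + frobNorm (1 - P - Q) ^ 2 = Fintype.card ι := by
  have hsa : IsSelfAdjoint (P - Q) ∧ IsSelfAdjoint (1 - P - Q) :=
    ⟨hP.isSelfAdjoint.sub hQ.isSelfAdjoint,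
      ((IsSelfAdjoint.one _).sub hP.isSelfAdjoint).sub hQ.isSelfAdjoint⟩
  rw [frobNorm_sq, frobNorm_sq, hsa.1.star_eq, hsa.2.star_eq, ← Complex.add_re, ← trace_add,
    hP.isIdempotentElem.sub_mul_self_add_one_sub_sub_mul_self hQ.isIdempotentElem, trace_one]
  simp

theorem frobNorm_unitary_conj {U : Matrix ι ι ℂ} (hU : U ∈ unitaryGroup ι ℂ)
    (A : Matrix ι ι ℂ) : frobNorm (U * A * star U) = frobNorm A := by
  refine (sq_eq_sq₀ (frobNorm_nonneg _) (frobNorm_nonneg _)).1 ?_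
  have h : star (U * A * star U) * (U * A * star U) = U * (star A * A) * star U := by
    simp only [star_mul, star_star, mul_assoc]
    rw [← mul_assoc (star U) U, Unitary.star_mul_self_of_mem hU, one_mul]
  rw [frobNorm_sq, frobNorm_sq, h, trace_mul_cycle, Unitary.star_mul_self_of_mem hU, one_mul]

theorem frobNorm_conj_sub_conj (U V : unitaryGroup ι ℂ) (A B : Matrix ι ι ℂ) :
    frobNorm ((U : Matrix ι ι ℂ) * A * star (U : Matrix ι ι ℂ) -
      (V : Matrix ι ι ℂ) * B * star (V : Matrix ι ι ℂ)) =
      frobNorm (A - ((U⁻¹ * V : unitaryGroup ι ℂ) : Matrix ι ι ℂ) * B *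
        star ((U⁻¹ * V : unitaryGroup ι ℂ) : Matrix ι ι ℂ)) := by
  have hU : (U : Matrix ι ι ℂ) * star (U : Matrix ι ι ℂ) = 1 :=
    Unitary.mul_star_self_of_mem U.2
  conv_rhs => rw [← frobNorm_unitary_conj U.2]
  congr 1
  simp only [Submonoid.coe_mul, UnitaryGroup.inv_val, star_mul, star_star, mul_sub, sub_mul,
    mul_assoc]
  rw [← mul_assoc (U : Matrix ι ι ℂ) (star _), hU, one_mul, mul_one]

theorem frobNorm_sub_conj_sq_add_frobNorm_sub_conj_mul_sq {P : Matrix ι ι ℂ}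
    (hP : IsStarProjection P) {X : unitaryGroup ι ℂ}
    (hX : star (X : Matrix ι ι ℂ) * P * X = 1 - P) (W : unitaryGroup ι ℂ) :
    frobNorm (P - (W : Matrix ι ι ℂ) * P * star (W : Matrix ι ι ℂ)) ^ 2 +
      frobNorm (P - ((X * W : unitaryGroup ι ℂ) : Matrix ι ι ℂ) * P *
        star ((X * W : unitaryGroup ι ℂ) : Matrix ι ι ℂ)) ^ 2 = Fintype.card ι := by
  have hXW := frobNorm_conj_sub_conj X⁻¹ W P P
  rw [inv_inv, UnitaryGroup.inv_val, star_star, hX] at hXW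
  have hQ := hP.map (Unitary.conjStarAlgAut ℂ _ W)
  rw [Unitary.conjStarAlgAut_apply] at hQ
  rw [← hXW]
  exact frobNorm_sub_sq_add_frobNorm_one_sub_sub_sq hP hQ

theorem submatrix_id_mem_unitaryGroup {U : Matrix ι ι ℂ} (hU : U ∈ unitaryGroup ι ℂ)
    (σ : Equiv.Perm ι) : U.submatrix id σ ∈ unitaryGroup ι ℂ := by
  rw [mem_unitaryGroup_iff, star_eq_conjTranspose, conjTranspose_submatrix,
    submatrix_mul_equiv _ _ _ σ, ← star_eq_conjTranspose, Unitary.mul_star_self_of_mem hU,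
    submatrix_id_id]

theorem Matrix.IsHermitian.eigenvalues_eq_zero_or_one {P : Matrix ι ι ℂ} (hH : P.IsHermitian)
    (hP : IsIdempotentElem P) (i : ι) : hH.eigenvalues i = 0 ∨ hH.eigenvalues i = 1 :=
  hP.spectrum_subset ℝ (hH.eigenvalues_mem_spectrum_real i)

theorem Matrix.IsHermitian.card_eigenvalues_eq_one {P : Matrix ι ι ℂ} (hH : P.IsHermitian)
    (hP : IsIdempotentElem P) :
    (Fintype.card {i // hH.eigenvalues i = 1} : ℝ) = P.trace.re := by
  rw [hH.trace_eq_sum_eigenvalues, Complex.re_sum, Fintype.card_subtype, Finset.card_filter,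
    Nat.cast_sum]
  refine Finset.sum_congr rfl fun i _ => ?_
  rcases hH.eigenvalues_eq_zero_or_one hP i with h | h <;> simp [h]

theorem exists_unitary_star_conj_eq_one_sub {P : Matrix ι ι ℂ} (hP : IsStarProjection P)
    (hr : P.trace.re = Fintype.card ι / 2) :
    ∃ X : unitaryGroup ι ℂ, star (X : Matrix ι ι ℂ) * P * X = 1 - P := by
  have hH : P.IsHermitian := hP.isSelfAdjoint.isHermitian
  have h01 := hH.eigenvalues_eq_zero_or_one hP.isIdempotentElem
  have hcard := hH.card_eigenvalues_eq_one hP.isIdempotentElem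
  set φ := hH.eigenvalues
  obtain ⟨σ, hσ⟩ : ∃ σ : Equiv.Perm ι, ∀ i, φ (σ i) = 1 ↔ ¬φ i = 1 := by
    refine exists_perm_apply_iff_not (fun i => φ i = 1) ?_
    have htwice : 2 * Fintype.card {i // φ i = 1} = Fintype.card ι := by
      have : (2 * Fintype.card {i // φ i = 1} : ℝ) = Fintype.card ι := by rw [hcard, hr]; ring
      exact_mod_cast this
    rw [Fintype.card_subtype_compl]
    omega
  have hφσ : ∀ i, φ (σ i) = 1 - φ i := fun i => by
    have := hσ i
    rcases h01 i with h | h <;> rcases h01 (σ i) with h' | h' <;> simp_all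
  -- `u` diagonalises `P`; permuting its columns by `σ` exchanges the eigenvalues `0` and `1`.
  set u : Matrix ι ι ℂ := (hH.eigenvectorUnitary : Matrix ι ι ℂ)
  have hu : u ∈ unitaryGroup ι ℂ := hH.eigenvectorUnitary.2
  have hD : star u * P * u = diagonal (RCLike.ofReal ∘ φ) := by
    simpa using hH.conjStarAlgAut_star_eigenvectorUnitary
  have hspec : u * diagonal (RCLike.ofReal ∘ φ) * star u = P := by
    simpa using hH.spectral_theorem.symm
  have hv : star (u.submatrix id σ) * P * u.submatrix id σ =
      1 - diagonal (RCLike.ofReal ∘ φ) := by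
    rw [star_submatrix_id_mul_mul_submatrix_id, hD, submatrix_diagonal_equiv, ← diagonal_one,
      diagonal_sub]
    congr 1
    funext i
    simp [hφσ]
  refine ⟨⟨u.submatrix id σ, submatrix_id_mem_unitaryGroup hu σ⟩ * star ⟨u, hu⟩, ?_⟩
  simp only [Submonoid.coe_mul, Unitary.coe_star, star_mul, star_star]
  calc u * star (u.submatrix id σ) * P * (u.submatrix id σ * star u)
      = u * (star (u.submatrix id σ) * P * u.submatrix id σ) * star u := by
        simp only [mul_assoc]
    _ = 1 - P := by rw [hv, mul_sub, sub_mul, mul_one, Unitary.mul_star_self_of_mem hu, hspec]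

end Matrices

theorem integral_sq_le_mul_integral {α : Type*} [MeasurableSpace α] {μ : Measure α}
    {f : α → ℝ} {c : ℝ} (hf : Integrable f μ) (h0 : ∀ a, 0 ≤ f a) (hc : ∀ a, f a ≤ c) :
    ∫ a, f a ^ 2 ∂μ ≤ c * ∫ a, f a ∂μ := by
  rw [← integral_const_mul]
  refine integral_mono_of_nonneg (ae_of_all _ fun a => sq_nonneg _) (hf.const_mul c)
    (ae_of_all _ fun a => ?_)
  simp only [sq]
  exact mul_le_mul_of_nonneg_right (hc a) (h0 a)

section Group

variable {G : Type*} [Group G] [MeasurableSpace G] [MeasurableMul G] {μ : Measure G}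
  [IsProbabilityMeasure μ] [μ.IsMulLeftInvariant]

theorem integral_eq_half_of_add_comp_mul_left {h : G → ℝ} (hh : Integrable h μ) {c : ℝ} (x : G)
    (hx : ∀ g, h g + h (x * g) = c) : ∫ g, h g ∂μ = c / 2 := by
  have hsum : ∫ g, h g ∂μ + ∫ g, h (x * g) ∂μ = c := by
    rw [← integral_add hh (hh.comp_mul_left x)]
    simp [hx]
  rw [integral_mul_left_eq_self h x] at hsum
  linarith

theorem integral_integral_comp_inv_mul (f : G → ℝ) :
    ∫ g, ∫ g', f (g⁻¹ * g') ∂μ ∂μ = ∫ g, f g ∂μ := by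
  simp [integral_mul_left_eq_self f]

theorem sqrt_div_two_le_integral_of_sq_add_sq_comp_mul_left {f : G → ℝ}
    (hf : AEStronglyMeasurable f μ) (h0 : ∀ g, 0 ≤ f g) {c : ℝ} (hc : 0 < c) (x : G)
    (hx : ∀ g, f g ^ 2 + f (x * g) ^ 2 = c) : √c / 2 ≤ ∫ g, f g ∂μ := by
  have hsq_le : ∀ g, f g ^ 2 ≤ c := fun g => by linarith [hx g, sq_nonneg (f (x * g))]
  have hle : ∀ g, f g ≤ √c := fun g => Real.le_sqrt_of_sq_le (hsq_le g)
  have hint : Integrable f μ :=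
    .of_bound hf √c (ae_of_all _ fun g => (Real.norm_of_nonneg (h0 g)).trans_le (hle g))
  have hint_sq : Integrable (fun g => f g ^ 2) μ :=
    .of_bound (hf.pow 2) c
      (ae_of_all _ fun g => (Real.norm_of_nonneg (sq_nonneg _)).trans_le (hsq_le g))
  have hmean := integral_eq_half_of_add_comp_mul_left hint_sq x hx
  have hbound := integral_sq_le_mul_integral hint h0 hle
  rw [div_le_iff₀ two_pos]
  nlinarith [Real.mul_self_sqrt hc.le, Real.sqrt_pos.2 hc]

end Group

theorem haar_average_frobenius_lower_general
    {d : ℕ} (hd : 2 ≤ d)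
    (μ : Measure (Matrix.unitaryGroup (Fin d) ℂ))
    [μ.IsHaarMeasure] [IsProbabilityMeasure μ]
    (P : Matrix (Fin d) (Fin d) ℂ)
    (hP1 : Pᴴ = P) (hP2 : P * P = P) (hPr : (P.trace).re = (d : ℝ) / 2) :
    (∫ U : Matrix.unitaryGroup (Fin d) ℂ, ∫ V : Matrix.unitaryGroup (Fin d) ℂ,
        frobNorm ((U : Matrix (Fin d) (Fin d) ℂ) * P * (U : Matrix (Fin d) (Fin d) ℂ)ᴴ -
          (V : Matrix (Fin d) (Fin d) ℂ) * P * (V : Matrix (Fin d) (Fin d) ℂ)ᴴ) ∂μ ∂μ) ≥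
      Real.sqrt (d : ℝ) / 2 := by
  have hP : IsStarProjection P := ⟨hP2, hP1⟩
  obtain ⟨X, hX⟩ := exists_unitary_star_conj_eq_one_sub hP (by simpa using hPr)
  set f : Matrix.unitaryGroup (Fin d) ℂ → ℝ := fun W =>
    frobNorm (P - (W : Matrix (Fin d) (Fin d) ℂ) * P * star (W : Matrix (Fin d) (Fin d) ℂ))
  have hf : Continuous f := by fun_prop
  simp_rw [ge_iff_le, ← Matrix.star_eq_conjTranspose, frobNorm_conj_sub_conj]
  change √d / 2 ≤ ∫ U, ∫ V, f (U⁻¹ * V) ∂μ ∂μ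
  rw [integral_integral_comp_inv_mul f]
  refine sqrt_div_two_le_integral_of_sq_add_sq_comp_mul_left hf.aestronglyMeasurable
    (fun W => frobNorm_nonneg _) (by exact_mod_cast (by omega : 0 < d)) X fun W => ?_
  simpa only [Fintype.card_fin] using
    frobNorm_sub_conj_sq_add_frobNorm_sub_conj_mul_sq hP hX W

/-- Lower bound on the Haar average of the Frobenius distance between two
independent random rotations of a rank-`d/2` projector. -/
theorem haar_average_frobenius_lower
    {d : ℕ} (hd : 2 ≤ d) (hdeven : 2 ∣ d)
    (μ : Measure (Matrix.unitaryGroup (Fin d) ℂ))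
    [μ.IsHaarMeasure] [IsProbabilityMeasure μ]
    (P : Matrix (Fin d) (Fin d) ℂ)
    (hP1 : Pᴴ = P) (hP2 : P * P = P) (hPr : (P.trace).re = (d : ℝ) / 2) :
    (∫ U : Matrix.unitaryGroup (Fin d) ℂ, ∫ V : Matrix.unitaryGroup (Fin d) ℂ,
        frobNorm ((U : Matrix (Fin d) (Fin d) ℂ) * P * (U : Matrix (Fin d) (Fin d) ℂ)ᴴ -
          (V : Matrix (Fin d) (Fin d) ℂ) * P * (V : Matrix (Fin d) (Fin d) ℂ)ᴴ) ∂μ ∂μ) ≥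
      Real.sqrt (d : ℝ) / 2 :=
  haar_average_frobenius_lower_general hd μ P hP1 hP2 hPr
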